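/- Let T and S be commuting continuous surjective self-maps of a compact metric space X such that S is finite-to-one, and let ν be a T-invariant Borel probability measure on X. Then S_*ν is T-invariant and h_{S_*ν}(T) = h_ν(T). -/

import Mathlib

/-!
Pulling partitions back along `S` gives `h_{S_*ν}(T, Q) = h_ν(T, S⁻¹Q)`, hence `≤`. Conversely,
`X` is covered by countably many Borel sets on which `S` is injective (the points of a basic open
set that are alone in their fibre there), and the partition `E` generated by finitely many of them
consists of injectivity sets outside a set of measure `δ`. By Lusin–Souslin `S` maps Borel subsets
of these to Borel sets, so for the block `R = P ∨ ⋯ ∨ T^{-(K-1)}P` the partition `Q` generated by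
the images `S(A ∩ e)` makes every cell of `S⁻¹Q ∨ E` off the bad set lie inside a cell of `R`.
Hence `H_ν(R | S⁻¹Q) ≤ log |E| + δ K log |P|`, and the block inequality
`h(T, P) ≤ h(T, C) + H(R | C) / K` for `C = S⁻¹Q` gives `h_ν(T, P) ≤ h_{S_*ν}(T, Q) + ε` once `δ`
is small and `K` is large.
-/

open MeasureTheory

/-- The entropy `H_μ(P) = ∑_{A ∈ P} −μ(A) log μ(A)` of a finite collection of sets. -/
noncomputable def partEntropy {X : Type*} [MeasurableSpace X]
    (μ : Measure X) (P : Finset (Set X)) : ℝ :=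
  ∑ A ∈ P, Real.negMulLog (μ A).toReal

/-- The dynamical refinement `P ∨ T⁻¹P ∨ ⋯ ∨ T^{-(n-1)}P` of a finite partition `P`. -/
noncomputable def dynJoin {X : Type*} (T : X → X) (P : Finset (Set X)) (n : ℕ) :
    Finset (Set X) :=
  letI := Classical.decEq (Set X)
  (Fintype.piFinset fun _ : Fin n => P).image fun f => ⋂ i : Fin n, T^[(i : ℕ)] ⁻¹' f i

/-- `P` is a finite measurable partition of `X`. -/
def IsMeasPartition {X : Type*} [MeasurableSpace X] (P : Finset (Set X)) : Prop :=
  (∀ A ∈ P, MeasurableSet A) ∧ (⋃ A ∈ P, A) = Set.univ ∧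
    ∀ A ∈ P, ∀ B ∈ P, A ≠ B → A ∩ B = ∅

/-- The measure-theoretic (Kolmogorov–Sinai) entropy `h_μ(T)`, as the supremum over all
finite measurable partitions `P` of `lim_n H_μ(P ∨ ⋯ ∨ T^{-(n-1)}P)/n` (the limit equals
the infimum by subadditivity). -/
noncomputable def ksEntropy {X : Type*} [MeasurableSpace X]
    (μ : Measure X) (T : X → X) : ℝ :=
  ⨆ P : {P : Finset (Set X) // IsMeasPartition P},
    ⨅ n : ℕ, partEntropy μ (dynJoin T P.1 (n + 1)) / (n + 1)

/-- The minimal number of `(n, ε)`-Bowen balls needed to cover `F`. -/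
noncomputable def bowenCov {X : Type*} [MetricSpace X] (T : X → X) (F : Set X)
    (ε : ℝ) (n : ℕ) : ℕ :=
  sInf {k : ℕ | ∃ c : Finset X, c.card = k ∧
    F ⊆ ⋃ x ∈ c, {y | ∀ j < n, dist (T^[j] y) (T^[j] x) ≤ ε}}

/-- The topological entropy of `T` on the (invariant) set `F`, via Bowen covers:
`h_top(T|_F) = lim_{ε → 0⁺} limsup_n (1/n) log Cov_F(ε, n)`. -/
noncomputable def topEnt {X : Type*} [MetricSpace X] (T : X → X) (F : Set X) : ℝ :=
  ⨆ ε : {r : ℝ // 0 < r},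
    Filter.atTop.limsup fun n : ℕ => Real.log (bowenCov T F ε.1 n) / n

open ProbabilityTheory

section Partitions

variable {X Y Z : Type*}

noncomputable def partJoin (P Q : Finset (Set X)) : Finset (Set X) :=
  letI := Classical.decEq (Set X)
  (P ×ˢ Q).image fun p => p.1 ∩ p.2

noncomputable def partPreimage (f : X → Y) (P : Finset (Set Y)) : Finset (Set X) :=
  letI := Classical.decEq (Set X)
  P.image (f ⁻¹' ·)

noncomputable def partIJoin {ι : Type*} [DecidableEq ι] [Fintype ι] (P : Finset (Set Y))
    (g : ι → X → Y) : Finset (Set X) :=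
  letI := Classical.decEq (Set X)
  (Fintype.piFinset fun _ : ι => P).image fun s => ⋂ i, g i ⁻¹' s i

variable {ι κ : Type*} [DecidableEq ι] [Fintype ι] [DecidableEq κ] [Fintype κ]
  {P Q : Finset (Set X)} {D : Set X}

theorem mem_partJoin : D ∈ partJoin P Q ↔ ∃ A ∈ P, ∃ B ∈ Q, A ∩ B = D := by
  simp [partJoin, and_assoc]

theorem mem_partPreimage {f : X → Y} {P : Finset (Set Y)} :
    D ∈ partPreimage f P ↔ ∃ A ∈ P, f ⁻¹' A = D := by
  simp [partPreimage]

theorem mem_partIJoin {P : Finset (Set Y)} {g : ι → X → Y} :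
    D ∈ partIJoin P g ↔ ∃ s : ι → Set Y, (∀ i, s i ∈ P) ∧ ⋂ i, g i ⁻¹' s i = D := by
  simp [partIJoin]

theorem partJoin_comm (P Q : Finset (Set X)) : partJoin P Q = partJoin Q P := by
  ext D
  simp only [mem_partJoin]
  constructor <;>
  · rintro ⟨A, hA, B, hB, rfl⟩
    exact ⟨B, hB, A, hA, Set.inter_comm B A⟩

theorem partIJoin_comp_equiv {P : Finset (Set Y)} (g : ι → X → Y) (e : κ ≃ ι) :
    partIJoin P (g ∘ e) = partIJoin P g := by
  ext D
  simp only [mem_partIJoin]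
  constructor
  · rintro ⟨s, hs, rfl⟩
    exact ⟨s ∘ e.symm, fun i => hs _,
      by simpa using e.symm.surjective.iInter_comp fun i => g (e i) ⁻¹' s i⟩
  · rintro ⟨s, hs, rfl⟩
    exact ⟨s ∘ e, fun i => hs _, e.surjective.iInter_comp fun i => g i ⁻¹' s i⟩

theorem partIJoin_sumElim {P : Finset (Set Y)} (g : ι → X → Y) (h : κ → X → Y) :
    partIJoin P (Sum.elim g h) = partJoin (partIJoin P g) (partIJoin P h) := by
  ext D
  simp only [mem_partIJoin, mem_partJoin, Set.iInter_sum, Sum.elim_inl, Sum.elim_inr]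
  constructor
  · rintro ⟨s, hs, rfl⟩
    exact ⟨_, ⟨s ∘ Sum.inl, fun i => hs _, rfl⟩, _, ⟨s ∘ Sum.inr, fun i => hs _, rfl⟩, rfl⟩
  · rintro ⟨_, ⟨s, hs, rfl⟩, _, ⟨t, ht, rfl⟩, rfl⟩
    exact ⟨Sum.elim s t, fun i => by cases i <;> simp [hs, ht], rfl⟩

theorem partPreimage_partIJoin {P : Finset (Set Z)} (g : ι → Y → Z) (f : X → Y) :
    partPreimage f (partIJoin P g) = partIJoin P fun i => g i ∘ f := by
  ext D
  simp only [mem_partPreimage, mem_partIJoin]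
  constructor
  · rintro ⟨_, ⟨s, hs, rfl⟩, rfl⟩
    exact ⟨s, hs, by simp [Set.preimage_iInter, Set.preimage_comp]⟩
  · rintro ⟨s, hs, rfl⟩
    exact ⟨_, ⟨s, hs, rfl⟩, by simp [Set.preimage_iInter, Set.preimage_comp]⟩

theorem partIJoin_partPreimage {P : Finset (Set Z)} (f : Y → Z) (g : ι → X → Y) :
    partIJoin (partPreimage f P) g = partIJoin P fun i => f ∘ g i := by
  ext D
  simp only [mem_partIJoin, mem_partPreimage]
  constructor
  · rintro ⟨s, hs, rfl⟩
    choose t ht hts using hs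
    exact ⟨t, ht, by simp [← hts, Set.preimage_comp]⟩
  · rintro ⟨t, ht, rfl⟩
    exact ⟨fun i => f ⁻¹' t i, fun i => ⟨t i, ht i, rfl⟩, by simp [Set.preimage_comp]⟩

theorem partIJoin_partIJoin {P : Finset (Set Z)} (g : ι → Y → Z) (h : κ → X → Y) :
    partIJoin (partIJoin P g) h = partIJoin P fun p : κ × ι => g p.2 ∘ h p.1 := by
  ext D
  simp only [mem_partIJoin]
  constructor
  · rintro ⟨s, hs, rfl⟩
    choose t ht hts using hs
    refine ⟨fun p => t p.1 p.2, fun p => ht _ _, ?_⟩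
    simp only [← hts, Set.preimage_iInter, Set.preimage_comp]
    exact iInf_prod
  · rintro ⟨t, ht, rfl⟩
    refine ⟨fun j => ⋂ i, g i ⁻¹' t (j, i), fun j => ⟨_, fun i => ht _, rfl⟩, ?_⟩
    simp only [Set.preimage_iInter, Set.preimage_comp]
    exact (iInf_prod (f := fun p : κ × ι => h p.1 ⁻¹' (g p.2 ⁻¹' t p))).symm

theorem partIJoin_of_unique [Unique ι] {P : Finset (Set Y)} (g : ι → X → Y) :
    partIJoin P g = partPreimage (g default) P := by
  ext D
  simp only [mem_partIJoin, mem_partPreimage]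
  constructor
  · rintro ⟨s, hs, rfl⟩
    exact ⟨s default, hs _, (iInf_unique fun i => g i ⁻¹' s i).symm⟩
  · rintro ⟨A, hA, rfl⟩
    exact ⟨fun _ => A, fun _ => hA, iInf_unique fun i => g i ⁻¹' A⟩

theorem partIJoin_refines_comp {P : Finset (Set Y)} (g : ι → X → Y) (φ : κ → ι) :
    ∀ A ∈ partIJoin P g, ∃ B ∈ partIJoin P (g ∘ φ), A ⊆ B := by
  intro A hA
  obtain ⟨s, hs, rfl⟩ := mem_partIJoin.1 hA
  exact ⟨_, mem_partIJoin.2 ⟨s ∘ φ, fun k => hs _, rfl⟩,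
    Set.subset_iInter fun k => Set.iInter_subset (fun i => g i ⁻¹' s i) (φ k)⟩

end Partitions

section DynamicalJoin

variable {X Y : Type*}

theorem dynJoin_eq_partIJoin (T : X → X) (P : Finset (Set X)) (n : ℕ) :
    dynJoin T P n = partIJoin P fun i : Fin n => T^[i] := rfl

theorem dynJoin_zero (T : X → X) (P : Finset (Set X)) : dynJoin T P 0 = {Set.univ} := by
  ext D
  simp [dynJoin_eq_partIJoin, mem_partIJoin, eq_comm]

theorem dynJoin_one (T : X → X) (P : Finset (Set X)) : dynJoin T P 1 = P := by
  rw [dynJoin_eq_partIJoin, partIJoin_of_unique]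
  simp [partPreimage]

theorem dynJoin_add (T : X → X) (P : Finset (Set X)) (r s : ℕ) :
    dynJoin T P (r + s) = partJoin (dynJoin T P r) (partPreimage T^[r] (dynJoin T P s)) := by
  have : (fun i : Fin (r + s) => T^[i]) ∘ finSumFinEquiv =
      Sum.elim (fun i : Fin r => T^[i]) fun i : Fin s => T^[i] ∘ T^[r] := by
    funext i
    cases i <;> simp [← Function.iterate_add, add_comm]
  rw [dynJoin_eq_partIJoin, ← partIJoin_comp_equiv _ finSumFinEquiv, this, partIJoin_sumElim,
    dynJoin_eq_partIJoin T P s, partPreimage_partIJoin]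
  rfl

theorem dynJoin_succ (T : X → X) (P : Finset (Set X)) (n : ℕ) :
    dynJoin T P (n + 1) = partJoin (dynJoin T P n) (partPreimage T^[n] P) := by
  rw [dynJoin_add, dynJoin_one]

theorem dynJoin_iterate_dynJoin (T : X → X) (P : Finset (Set X)) (K n : ℕ) :
    dynJoin T^[K] (dynJoin T P K) n = dynJoin T P (n * K) := by
  have : (fun i : Fin (n * K) => T^[i]) ∘ finProdFinEquiv =
      fun p : Fin n × Fin K => T^[p.2] ∘ (T^[K])^[p.1] := by
    funext p
    simp [finProdFinEquiv, ← Function.iterate_mul, ← Function.iterate_add]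
  rw [dynJoin_eq_partIJoin, dynJoin_eq_partIJoin, partIJoin_partIJoin, dynJoin_eq_partIJoin,
    ← partIJoin_comp_equiv _ finProdFinEquiv, this]

theorem dynJoin_refines_dynJoin_iterate (T : X → X) (P : Finset (Set X)) {K : ℕ} (hK : 0 < K)
    (n : ℕ) : ∀ A ∈ dynJoin T P (n * K), ∃ B ∈ dynJoin T^[K] P n, A ⊆ B := by
  have : (fun i : Fin (n * K) => T^[i]) ∘ (fun j : Fin n => finProdFinEquiv (j, ⟨0, hK⟩)) =
      fun j : Fin n => (T^[K])^[j] := by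
    funext j
    simp [finProdFinEquiv, ← Function.iterate_mul]
  rw [dynJoin_eq_partIJoin, dynJoin_eq_partIJoin, ← this]
  exact partIJoin_refines_comp _ _

theorem partPreimage_dynJoin {S : X → Y} {T : X → X} {T' : Y → Y}
    (h : Function.Semiconj S T T') (Q : Finset (Set Y)) (n : ℕ) :
    partPreimage S (dynJoin T' Q n) = dynJoin T (partPreimage S Q) n := by
  rw [dynJoin_eq_partIJoin, dynJoin_eq_partIJoin, partPreimage_partIJoin, partIJoin_partPreimage]
  congr 1
  funext i
  exact (h.iterate_right i).comp_eq.symm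

theorem card_dynJoin_le (T : X → X) (P : Finset (Set X)) (n : ℕ) :
    (dynJoin T P n).card ≤ P.card ^ n :=
  Finset.card_image_le.trans (by simp)

theorem log_card_dynJoin_le (T : X → X) (P : Finset (Set X)) (n : ℕ) :
    Real.log (dynJoin T P n).card ≤ n * Real.log P.card := by
  rcases Nat.eq_zero_or_pos (dynJoin T P n).card with h0 | hpos
  · rw [h0, Nat.cast_zero, Real.log_zero]
    exact mul_nonneg n.cast_nonneg (Real.log_natCast_nonneg _)
  · rw [← Real.log_pow]
    exact Real.log_le_log (by exact_mod_cast hpos) (by exact_mod_cast card_dynJoin_le T P n)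

end DynamicalJoin

section MeasurablePartitions

variable {X : Type*} [MeasurableSpace X] {P Q : Finset (Set X)}

namespace IsMeasPartition

theorem eq_of_mem_of_mem (hP : IsMeasPartition P) {A B : Set X} (hA : A ∈ P) (hB : B ∈ P)
    {x : X} (hxA : x ∈ A) (hxB : x ∈ B) : A = B := by
  by_contra hAB
  have hx : x ∈ A ∩ B := ⟨hxA, hxB⟩
  rw [hP.2.2 A hA B hB hAB] at hx
  exact hx

theorem exists_mem (hP : IsMeasPartition P) (x : X) : ∃ A ∈ P, x ∈ A := by
  have hx : x ∈ ⋃ A ∈ P, A := hP.2.1 ▸ Set.mem_univ x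
  simpa using hx

theorem singleton_univ : IsMeasPartition ({Set.univ} : Finset (Set X)) :=
  ⟨by simp, by simp, by simp⟩

theorem pair {G : Set X} (hG : MeasurableSet G) : IsMeasPartition ({G, Gᶜ} : Finset (Set X)) := by
  refine ⟨by simp [hG], by simp [Set.union_compl_self], ?_⟩
  simp only [Finset.mem_insert, Finset.mem_singleton]
  rintro A (rfl | rfl) B (rfl | rfl) hAB <;> simp_all

protected theorem partJoin (hP : IsMeasPartition P) (hQ : IsMeasPartition Q) :
    IsMeasPartition (partJoin P Q) := by
  refine ⟨?_, ?_, ?_⟩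
  · intro D hD
    obtain ⟨A, hA, B, hB, rfl⟩ := mem_partJoin.1 hD
    exact (hP.1 A hA).inter (hQ.1 B hB)
  · refine Set.eq_univ_of_forall fun x => ?_
    obtain ⟨A, hA, hxA⟩ := hP.exists_mem x
    obtain ⟨B, hB, hxB⟩ := hQ.exists_mem x
    exact Set.mem_biUnion (mem_partJoin.2 ⟨A, hA, B, hB, rfl⟩) ⟨hxA, hxB⟩
  · intro D hD D' hD' hne
    obtain ⟨A, hA, B, hB, rfl⟩ := mem_partJoin.1 hD
    obtain ⟨A', hA', B', hB', rfl⟩ := mem_partJoin.1 hD'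
    refine Set.eq_empty_of_forall_notMem fun x ⟨⟨hxA, hxB⟩, hxA', hxB'⟩ => hne ?_
    rw [hP.eq_of_mem_of_mem hA hA' hxA hxA', hQ.eq_of_mem_of_mem hB hB' hxB hxB']

protected theorem partPreimage {Y : Type*} [MeasurableSpace Y] {f : Y → X} (hf : Measurable f)
    (hP : IsMeasPartition P) : IsMeasPartition (partPreimage f P) := by
  refine ⟨?_, ?_, ?_⟩
  · intro D hD
    obtain ⟨A, hA, rfl⟩ := mem_partPreimage.1 hD
    exact hf (hP.1 A hA)
  · refine Set.eq_univ_of_forall fun x => ?_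
    obtain ⟨A, hA, hxA⟩ := hP.exists_mem (f x)
    exact Set.mem_biUnion (mem_partPreimage.2 ⟨A, hA, rfl⟩) hxA
  · intro D hD D' hD' hne
    obtain ⟨A, hA, rfl⟩ := mem_partPreimage.1 hD
    obtain ⟨A', hA', rfl⟩ := mem_partPreimage.1 hD'
    refine Set.eq_empty_of_forall_notMem fun x ⟨hxA, hxA'⟩ => hne ?_
    rw [hP.eq_of_mem_of_mem hA hA' hxA hxA']

protected theorem partIJoin {Y ι : Type*} [MeasurableSpace Y] [DecidableEq ι] [Fintype ι]
    {g : ι → Y → X} (hg : ∀ i, Measurable (g i)) (hP : IsMeasPartition P) :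
    IsMeasPartition (partIJoin P g) := by
  refine ⟨?_, ?_, ?_⟩
  · intro D hD
    obtain ⟨s, hs, rfl⟩ := mem_partIJoin.1 hD
    exact MeasurableSet.iInter fun i => hg i (hP.1 _ (hs i))
  · refine Set.eq_univ_of_forall fun x => ?_
    choose s hs hxs using fun i => hP.exists_mem (g i x)
    exact Set.mem_biUnion (mem_partIJoin.2 ⟨s, hs, rfl⟩) (Set.mem_iInter.2 hxs)
  · intro D hD D' hD' hne
    obtain ⟨s, hs, rfl⟩ := mem_partIJoin.1 hD
    obtain ⟨t, ht, rfl⟩ := mem_partIJoin.1 hD'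
    refine Set.eq_empty_of_forall_notMem fun x ⟨hxs, hxt⟩ => hne ?_
    exact Set.iInter_congr fun i => by
      rw [hP.eq_of_mem_of_mem (hs i) (ht i) (Set.mem_iInter.1 hxs i) (Set.mem_iInter.1 hxt i)]

protected theorem dynJoin {T : X → X} (hT : Measurable T) (hP : IsMeasPartition P) (n : ℕ) :
    IsMeasPartition (dynJoin T P n) :=
  hP.partIJoin fun _ => hT.iterate _

theorem sum_partJoin (hP : IsMeasPartition P) (hQ : IsMeasPartition Q) {φ : Set X → ℝ}
    (hφ : φ ∅ = 0) : ∑ D ∈ partJoin P Q, φ D = ∑ A ∈ P, ∑ B ∈ Q, φ (A ∩ B) := by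
  classical
  rw [partJoin, Finset.sum_image_of_pairwise_eq_zero, Finset.sum_product]
  rintro ⟨A, B⟩ hAB ⟨A', B'⟩ hAB' hne heq
  simp only [Finset.coe_product, Set.mem_prod, Finset.mem_coe] at hAB hAB'
  convert hφ
  refine Set.eq_empty_of_forall_notMem fun x hx => hne ?_
  have hx' : x ∈ A' ∩ B' := heq ▸ hx
  rw [hP.eq_of_mem_of_mem hAB.1 hAB'.1 hx.1 hx'.1, hQ.eq_of_mem_of_mem hAB.2 hAB'.2 hx.2 hx'.2]

theorem sum_partPreimage {Y : Type*} (hP : IsMeasPartition P) (f : Y → X) {φ : Set Y → ℝ}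
    (hφ : φ ∅ = 0) : ∑ D ∈ partPreimage f P, φ D = ∑ A ∈ P, φ (f ⁻¹' A) := by
  classical
  rw [partPreimage, Finset.sum_image_of_pairwise_eq_zero]
  intro A hA B hB hne heq
  convert hφ
  calc f ⁻¹' A = f ⁻¹' A ∩ f ⁻¹' B := by rw [← heq, Set.inter_self]
    _ = ∅ := by rw [← Set.preimage_inter, hP.2.2 A hA B hB hne, Set.preimage_empty]

theorem sum_measure_inter (μ : Measure X) [IsFiniteMeasure μ] (hP : IsMeasPartition P)
    {V : Set X} (hV : MeasurableSet V) : ∑ A ∈ P, (μ (A ∩ V)).toReal = (μ V).toReal := by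
  have hdisj : (P : Set (Set X)).PairwiseDisjoint fun A => A ∩ V := fun A hA B hB hne =>
    Set.disjoint_left.2 fun x hxA hxB => hne (hP.eq_of_mem_of_mem hA hB hxA.1 hxB.1)
  rw [← ENNReal.toReal_sum fun A _ => measure_ne_top μ _,
    ← measure_biUnion_finset hdisj fun A hA => (hP.1 A hA).inter hV, ← Set.iUnion₂_inter, hP.2.1,
    Set.univ_inter]

theorem sum_measure_toReal (μ : Measure X) [IsProbabilityMeasure μ] (hP : IsMeasPartition P) :
    ∑ A ∈ P, (μ A).toReal = 1 := by
  simpa using hP.sum_measure_inter μ MeasurableSet.univ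

end IsMeasPartition

theorem exists_isMeasPartition_subset_or_subset_compl {ι : Type*} (s : Finset ι) (G : ι → Set X)
    (hG : ∀ i ∈ s, MeasurableSet (G i)) :
    ∃ Q : Finset (Set X), IsMeasPartition Q ∧ ∀ B ∈ Q, ∀ i ∈ s, B ⊆ G i ∨ B ⊆ (G i)ᶜ := by
  classical
  induction s using Finset.induction_on with
  | empty => exact ⟨{Set.univ}, IsMeasPartition.singleton_univ, by simp⟩
  | insert i s _ ih =>
    obtain ⟨Q, hQ, hQG⟩ := ih fun j hj => hG j (Finset.mem_insert_of_mem hj)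
    refine ⟨partJoin Q {G i, (G i)ᶜ},
      hQ.partJoin (IsMeasPartition.pair (hG i (Finset.mem_insert_self i s))), ?_⟩
    intro B hB j hj
    obtain ⟨C, hC, E, hE, rfl⟩ := mem_partJoin.1 hB
    rcases Finset.mem_insert.1 hj with rfl | hj
    · simp only [Finset.mem_insert, Finset.mem_singleton] at hE
      rcases hE with rfl | rfl
      exacts [Or.inl Set.inter_subset_right, Or.inr Set.inter_subset_right]
    · exact (hQG C hC j hj).imp Set.inter_subset_left.trans Set.inter_subset_left.trans

end MeasurablePartitions

section Entropy

variable {X : Type*} [MeasurableSpace X] {P Q C R : Finset (Set X)}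

noncomputable def condPartEntropy (μ : Measure X) (R C : Finset (Set X)) : ℝ :=
  ∑ B ∈ C, (μ B).toReal * partEntropy μ[|B] R

@[simp]
theorem partEntropy_zero (P : Finset (Set X)) : partEntropy (0 : Measure X) P = 0 := by
  simp [partEntropy]

@[simp]
theorem condPartEntropy_zero (R C : Finset (Set X)) : condPartEntropy (0 : Measure X) R C = 0 := by
  simp [condPartEntropy]

variable (μ : Measure X) [IsZeroOrProbabilityMeasure μ]

theorem partEntropy_singleton_univ : partEntropy μ {Set.univ} = 0 := by
  rcases eq_zero_or_isProbabilityMeasure μ with rfl | _ <;> simp [partEntropy]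

theorem partEntropy_nonneg (P : Finset (Set X)) : 0 ≤ partEntropy μ P :=
  Finset.sum_nonneg fun _ _ => Real.negMulLog_nonneg ENNReal.toReal_nonneg
    (ENNReal.toReal_le_of_le_ofReal zero_le_one (by simpa using prob_le_one))

theorem condPartEntropy_nonneg (μ : Measure X) (R C : Finset (Set X)) :
    0 ≤ condPartEntropy μ R C :=
  Finset.sum_nonneg fun _ _ => mul_nonneg ENNReal.toReal_nonneg (partEntropy_nonneg _ R)

theorem partEntropy_le_log_card (hP : IsMeasPartition P) : partEntropy μ P ≤ Real.log P.card := by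
  rcases eq_zero_or_isProbabilityMeasure μ with rfl | _
  · simpa using Real.log_natCast_nonneg _
  rcases P.eq_empty_or_nonempty with rfl | hne
  · simp [partEntropy]
  have hn : (0 : ℝ) < P.card := by exact_mod_cast hne.card_pos
  have hJensen := Real.concaveOn_negMulLog.le_map_sum (t := P) (w := fun _ => (P.card : ℝ)⁻¹)
    (p := fun A => (μ A).toReal) (fun _ _ => by positivity) (by simp [hn.ne'])
    (fun _ _ => Set.mem_Ici.2 ENNReal.toReal_nonneg)
  simp only [smul_eq_mul, ← Finset.mul_sum, hP.sum_measure_toReal μ, mul_one] at hJensen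
  rw [Real.negMulLog, Real.log_inv, neg_mul_neg] at hJensen
  exact (mul_le_mul_iff_right₀ (inv_pos.2 hn)).1 hJensen

theorem partEntropy_partJoin (hP : IsMeasPartition P) (hQ : IsMeasPartition Q) :
    partEntropy μ (partJoin P Q) = partEntropy μ P + condPartEntropy μ Q P := by
  rcases eq_zero_or_isProbabilityMeasure μ with rfl | _
  · simp
  rw [partEntropy, hP.sum_partJoin hQ (by simp), partEntropy, condPartEntropy,
    ← Finset.sum_add_distrib]
  refine Finset.sum_congr rfl fun A hA => ?_
  rcases eq_or_ne (μ A) 0 with h0 | h0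
  · simp [h0, measure_mono_null Set.inter_subset_left h0]
  have := cond_isProbabilityMeasure (s := A) h0
  have hmul : ∀ B, (μ (A ∩ B)).toReal = (μ[B|A]).toReal * (μ A).toReal := fun B => by
    rw [← ENNReal.toReal_mul, cond_mul_eq_inter (hP.1 A hA)]
  simp only [hmul, Real.negMulLog_mul, Finset.sum_add_distrib, ← Finset.sum_mul, ← Finset.mul_sum,
    hQ.sum_measure_toReal μ[|A], partEntropy]
  ring

theorem condPartEntropy_le_partEntropy (hR : IsMeasPartition R) (hC : IsMeasPartition C) :
    condPartEntropy μ R C ≤ partEntropy μ R := by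
  rcases eq_zero_or_isProbabilityMeasure μ with rfl | _
  · simp
  simp only [condPartEntropy, partEntropy, Finset.mul_sum]
  rw [Finset.sum_comm]
  refine Finset.sum_le_sum fun A hA => ?_
  have hsum : ∑ B ∈ C, (μ B).toReal * (μ[A|B]).toReal = (μ A).toReal := by
    rw [← hC.sum_measure_inter μ (hR.1 A hA)]
    refine Finset.sum_congr rfl fun B hB => ?_
    rw [← ENNReal.toReal_mul, mul_comm, cond_mul_eq_inter (hC.1 B hB), Set.inter_comm]
  simpa [hsum] using Real.concaveOn_negMulLog.le_map_sum (t := C) (w := fun B => (μ B).toReal)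
    (p := fun B => (μ[A|B]).toReal) (fun _ _ => ENNReal.toReal_nonneg) (hC.sum_measure_toReal μ)
    (fun _ _ => Set.mem_Ici.2 ENNReal.toReal_nonneg)

theorem partEntropy_le_partJoin_right (hP : IsMeasPartition P) (hQ : IsMeasPartition Q) :
    partEntropy μ Q ≤ partEntropy μ (partJoin P Q) := by
  rw [partJoin_comm, partEntropy_partJoin μ hQ hP]
  linarith [condPartEntropy_nonneg μ P Q]

theorem partEntropy_partJoin_le (hP : IsMeasPartition P) (hQ : IsMeasPartition Q) :
    partEntropy μ (partJoin P Q) ≤ partEntropy μ P + partEntropy μ Q := by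
  rw [partEntropy_partJoin μ hP hQ]
  linarith [condPartEntropy_le_partEntropy μ hQ hP]

theorem partEntropy_partJoin_of_refines (μ : Measure X) (hP : IsMeasPartition P)
    (hC : IsMeasPartition C) (h : ∀ A ∈ P, ∃ B ∈ C, A ⊆ B) :
    partEntropy μ (partJoin P C) = partEntropy μ P := by
  rw [partEntropy, hP.sum_partJoin hC (by simp), partEntropy]
  refine Finset.sum_congr rfl fun A hA => ?_
  obtain ⟨B, hB, hAB⟩ := h A hA
  rw [Finset.sum_eq_single B (fun B' hB' hne => ?_) (absurd hB), Set.inter_eq_left.2 hAB]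
  have : A ∩ B' = ∅ := Set.subset_empty_iff.1
    ((Set.inter_subset_inter_left B' hAB).trans (hC.2.2 B hB B' hB' hne.symm).subset)
  simp [this]

theorem partEntropy_le_of_refines (hP : IsMeasPartition P) (hC : IsMeasPartition C)
    (h : ∀ A ∈ P, ∃ B ∈ C, A ⊆ B) : partEntropy μ C ≤ partEntropy μ P :=
  (partEntropy_le_partJoin_right μ hP hC).trans_eq (partEntropy_partJoin_of_refines μ hP hC h)

end Entropy

section ConditionalEntropy

variable {X Y : Type*} [MeasurableSpace X] [MeasurableSpace Y] {P Q C R : Finset (Set X)}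
  (μ : Measure X)

theorem condPartEntropy_le_partJoin_right (hP : IsMeasPartition P) (hQ : IsMeasPartition Q) :
    condPartEntropy μ Q C ≤ condPartEntropy μ (partJoin P Q) C :=
  Finset.sum_le_sum fun _ _ => mul_le_mul_of_nonneg_left
    (partEntropy_le_partJoin_right _ hP hQ) ENNReal.toReal_nonneg

theorem condPartEntropy_partJoin_le (hP : IsMeasPartition P) (hQ : IsMeasPartition Q) :
    condPartEntropy μ (partJoin P Q) C ≤ condPartEntropy μ P C + condPartEntropy μ Q C := by
  simp only [condPartEntropy, ← Finset.sum_add_distrib, ← mul_add]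
  exact Finset.sum_le_sum fun _ _ => mul_le_mul_of_nonneg_left
    (partEntropy_partJoin_le _ hP hQ) ENNReal.toReal_nonneg

theorem condPartEntropy_partJoin [IsFiniteMeasure μ] (hC : IsMeasPartition C)
    (hP : IsMeasPartition P) (hQ : IsMeasPartition Q) :
    condPartEntropy μ (partJoin P Q) C =
      condPartEntropy μ P C + condPartEntropy μ Q (partJoin C P) := by
  rw [condPartEntropy, condPartEntropy, condPartEntropy, hC.sum_partJoin hP (by simp),
    ← Finset.sum_add_distrib]
  refine Finset.sum_congr rfl fun B hB => ?_
  rw [partEntropy_partJoin _ hP hQ, mul_add, condPartEntropy, Finset.mul_sum]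
  congr 1
  refine Finset.sum_congr rfl fun E hE => ?_
  rw [← mul_assoc, ← ENNReal.toReal_mul, mul_comm (μ B), cond_mul_eq_inter (hC.1 B hB),
    cond_cond_eq_cond_inter (hC.1 B hB) (hP.1 E hE)]

theorem condPartEntropy_partJoin_cond_le [IsFiniteMeasure μ] (hC : IsMeasPartition C)
    (hP : IsMeasPartition P) (hQ : IsMeasPartition Q) :
    condPartEntropy μ Q (partJoin C P) ≤ condPartEntropy μ Q C := by
  have := condPartEntropy_partJoin μ hC hP hQ
  linarith [condPartEntropy_partJoin_le μ (C := C) hP hQ]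

theorem partEntropy_cond_eq_zero [IsFiniteMeasure μ] {D : Set X} (hD : MeasurableSet D)
    (h : ∀ A ∈ R, D ⊆ A ∨ Disjoint D A) : partEntropy μ[|D] R = 0 := by
  rcases eq_or_ne (μ D) 0 with h0 | h0
  · rw [cond_eq_zero_of_meas_eq_zero h0, partEntropy_zero]
  refine Finset.sum_eq_zero fun A hA => ?_
  rcases h A hA with hDA | hDA
  · rw [cond_apply hD, Set.inter_eq_left.2 hDA, ENNReal.inv_mul_cancel h0 (measure_ne_top μ D)]
    simp
  · simp [cond_apply hD, hDA.inter_eq]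

theorem condPartEntropy_le_measure_mul_log_card [IsFiniteMeasure μ] {V : Finset (Set X)}
    {F : Set X} (hR : IsMeasPartition R) (hV : IsMeasPartition V) (hF : MeasurableSet F)
    (h : ∀ D ∈ V, D ⊆ F ∨ ∀ A ∈ R, D ⊆ A ∨ Disjoint D A) :
    condPartEntropy μ R V ≤ (μ F).toReal * Real.log R.card := by
  rw [← hV.sum_measure_inter μ hF, Finset.sum_mul, condPartEntropy]
  refine Finset.sum_le_sum fun D hD => ?_
  rcases h D hD with hDF | hpure
  · rw [Set.inter_eq_left.2 hDF]
    exact mul_le_mul_of_nonneg_left (partEntropy_le_log_card _ hR) ENNReal.toReal_nonneg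
  · rw [partEntropy_cond_eq_zero μ (hV.1 D hD) hpure, mul_zero]
    exact mul_nonneg ENNReal.toReal_nonneg (Real.log_natCast_nonneg _)

variable {μ} {ν : Measure Y} {f : X → Y}

theorem cond_preimage (hf : MeasurePreserving f μ ν) {A B : Set Y} (hA : MeasurableSet A)
    (hB : MeasurableSet B) : μ[f ⁻¹' A|f ⁻¹' B] = ν[A|B] := by
  rw [cond_apply' (hf.measurable hA), cond_apply' hA, ← Set.preimage_inter,
    hf.measure_preimage hB.nullMeasurableSet, hf.measure_preimage (hB.inter hA).nullMeasurableSet]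

theorem partEntropy_partPreimage (hf : MeasurePreserving f μ ν) {P : Finset (Set Y)}
    (hP : IsMeasPartition P) : partEntropy μ (partPreimage f P) = partEntropy ν P := by
  rw [partEntropy, hP.sum_partPreimage f (by simp), partEntropy]
  exact Finset.sum_congr rfl fun A hA => by
    rw [hf.measure_preimage (hP.1 A hA).nullMeasurableSet]

theorem condPartEntropy_partPreimage (hf : MeasurePreserving f μ ν) {R C : Finset (Set Y)}
    (hR : IsMeasPartition R) (hC : IsMeasPartition C) :
    condPartEntropy μ (partPreimage f R) (partPreimage f C) = condPartEntropy ν R C := by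
  rw [condPartEntropy, hC.sum_partPreimage f (by simp), condPartEntropy]
  refine Finset.sum_congr rfl fun B hB => ?_
  rw [hf.measure_preimage (hC.1 B hB).nullMeasurableSet, partEntropy,
    hR.sum_partPreimage f (by simp), partEntropy]
  congr 1
  exact Finset.sum_congr rfl fun A hA => by rw [cond_preimage hf (hR.1 A hA) (hC.1 B hB)]

end ConditionalEntropy

section EntropyRate

variable {X Y : Type*} [MeasurableSpace X] [MeasurableSpace Y] {μ : Measure X} {T : X → X}
  {P C R : Finset (Set X)}

theorem condPartEntropy_dynJoin_le [IsFiniteMeasure μ] (hT : MeasurePreserving T μ μ)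
    (hR : IsMeasPartition R) (hC : IsMeasPartition C) (n : ℕ) :
    condPartEntropy μ (dynJoin T R n) (dynJoin T C n) ≤ n * condPartEntropy μ R C := by
  induction n with
  | zero => simp [dynJoin_zero, condPartEntropy, partEntropy_singleton_univ]
  | succ n ih =>
    have hRn := hR.dynJoin hT.measurable n
    have hCn := hC.dynJoin hT.measurable n
    have hRpre := hR.partPreimage (hT.iterate n).measurable
    have hCpre := hC.partPreimage (hT.iterate n).measurable
    rw [dynJoin_succ, dynJoin_succ]
    calc _ ≤ condPartEntropy μ (dynJoin T R n) (partJoin (dynJoin T C n) (partPreimage T^[n] C))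
          + condPartEntropy μ (partPreimage T^[n] R)
            (partJoin (dynJoin T C n) (partPreimage T^[n] C)) :=
          condPartEntropy_partJoin_le μ hRn hRpre
      _ ≤ condPartEntropy μ (dynJoin T R n) (dynJoin T C n)
          + condPartEntropy μ (partPreimage T^[n] R) (partPreimage T^[n] C) := by
          gcongr
          · exact condPartEntropy_partJoin_cond_le μ hCn hCpre hRn
          · rw [partJoin_comm]
            exact condPartEntropy_partJoin_cond_le μ hCpre hCn hRpre
      _ ≤ (n + 1 : ℕ) * condPartEntropy μ R C := by
          rw [condPartEntropy_partPreimage (hT.iterate n) hR hC]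
          push_cast
          linarith

theorem partEntropy_dynJoin_le_add [IsProbabilityMeasure μ] (hT : MeasurePreserving T μ μ)
    (hR : IsMeasPartition R) (hC : IsMeasPartition C) (n : ℕ) :
    partEntropy μ (dynJoin T R n) ≤ partEntropy μ (dynJoin T C n) + n * condPartEntropy μ R C := by
  have hRn := hR.dynJoin hT.measurable n
  have hCn := hC.dynJoin hT.measurable n
  calc partEntropy μ (dynJoin T R n) ≤ partEntropy μ (partJoin (dynJoin T C n) (dynJoin T R n)) :=
        partEntropy_le_partJoin_right μ hCn hRn
    _ = partEntropy μ (dynJoin T C n) + condPartEntropy μ (dynJoin T R n) (dynJoin T C n) :=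
        partEntropy_partJoin μ hCn hRn
    _ ≤ _ := by grw [condPartEntropy_dynJoin_le hT hR hC n]

theorem subadditive_partEntropy_dynJoin [IsZeroOrProbabilityMeasure μ]
    (hT : MeasurePreserving T μ μ) (hP : IsMeasPartition P) :
    Subadditive fun n => partEntropy μ (dynJoin T P n) := fun r s => by
  have hs := hP.dynJoin hT.measurable s
  show partEntropy μ (dynJoin T P (r + s)) ≤ partEntropy μ (dynJoin T P r) + partEntropy μ _
  rw [dynJoin_add, ← partEntropy_partPreimage (hT.iterate r) hs]
  exact partEntropy_partJoin_le μ (hP.dynJoin hT.measurable r)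
    (hs.partPreimage (hT.iterate r).measurable)

noncomputable def entropyRate (μ : Measure X) (T : X → X) (P : Finset (Set X)) : ℝ :=
  ⨅ n : ℕ, partEntropy μ (dynJoin T P (n + 1)) / (n + 1)

theorem ksEntropy_eq_iSup_entropyRate (μ : Measure X) (T : X → X) :
    ksEntropy μ T = ⨆ P : {P : Finset (Set X) // IsMeasPartition P}, entropyRate μ T P.1 :=
  rfl

theorem entropyRate_le_div [IsZeroOrProbabilityMeasure μ] (T : X → X) (P : Finset (Set X))
    {n : ℕ} (hn : n ≠ 0) : entropyRate μ T P ≤ partEntropy μ (dynJoin T P n) / n := by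
  obtain ⟨m, rfl⟩ := Nat.exists_eq_succ_of_ne_zero hn
  have hbdd : BddBelow (Set.range fun k : ℕ => partEntropy μ (dynJoin T P (k + 1)) / (k + 1)) :=
    ⟨0, by rintro _ ⟨k, rfl⟩; exact div_nonneg (partEntropy_nonneg μ _) (by positivity)⟩
  exact (ciInf_le hbdd m).trans_eq (by push_cast; rfl)

theorem partEntropy_dynJoin_mul_le [IsProbabilityMeasure μ] (hT : MeasurePreserving T μ μ)
    (hP : IsMeasPartition P) (hC : IsMeasPartition C) {K : ℕ} (hK : 0 < K) (m : ℕ) :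
    partEntropy μ (dynJoin T P (m * K)) ≤
      K * partEntropy μ (dynJoin T C m) + m * condPartEntropy μ (dynJoin T P K) C :=
  calc partEntropy μ (dynJoin T P (m * K))
      = partEntropy μ (dynJoin T^[K] (dynJoin T P K) m) := by rw [dynJoin_iterate_dynJoin]
    _ ≤ partEntropy μ (dynJoin T^[K] C m) + m * condPartEntropy μ (dynJoin T P K) C :=
        partEntropy_dynJoin_le_add (hT.iterate K) (hP.dynJoin hT.measurable K) hC m
    _ ≤ partEntropy μ (dynJoin T C (m * K)) + m * condPartEntropy μ (dynJoin T P K) C := by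
        grw [partEntropy_le_of_refines μ (hC.dynJoin hT.measurable _)
          (hC.dynJoin (hT.iterate K).measurable m) (dynJoin_refines_dynJoin_iterate T C hK m)]
    _ ≤ K * partEntropy μ (dynJoin T C m) + m * condPartEntropy μ (dynJoin T P K) C := by
        have := (subadditive_partEntropy_dynJoin hT hC).apply_mul_add_le K m 0
        simp only [add_zero, dynJoin_zero, partEntropy_singleton_univ] at this
        rw [mul_comm m K]
        linarith

theorem entropyRate_le_add_condPartEntropy [IsProbabilityMeasure μ]
    (hT : MeasurePreserving T μ μ) (hP : IsMeasPartition P) (hC : IsMeasPartition C) {K : ℕ}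
    (hK : 0 < K) :
    entropyRate μ T P ≤ entropyRate μ T C + condPartEntropy μ (dynJoin T P K) C / K := by
  set c := condPartEntropy μ (dynJoin T P K) C
  suffices h : ∀ n : ℕ,
      entropyRate μ T P - c / K ≤ partEntropy μ (dynJoin T C (n + 1)) / (n + 1) from
    sub_le_iff_le_add.1 (le_ciInf h)
  intro n
  have hrate := entropyRate_le_div (μ := μ) T P (n := (n + 1) * K) (by positivity)
  have hK' : (0 : ℝ) < K := by exact_mod_cast hK
  push_cast at hrate
  calc entropyRate μ T P - c / K
      ≤ partEntropy μ (dynJoin T P ((n + 1) * K)) / ((n + 1) * K) - c / K := by linarith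
    _ ≤ (K * partEntropy μ (dynJoin T C (n + 1)) + (n + 1 : ℕ) * c) / ((n + 1) * K) - c / K := by
        gcongr
        exact partEntropy_dynJoin_mul_le hT hP hC hK (n + 1)
    _ = partEntropy μ (dynJoin T C (n + 1)) / (n + 1) := by
        push_cast
        field_simp
        ring

theorem entropyRate_partPreimage {ν : Measure Y} {S : X → Y} {T' : Y → Y}
    (hS : MeasurePreserving S μ ν) (hST : Function.Semiconj S T T') (hT' : Measurable T')
    {Q : Finset (Set Y)} (hQ : IsMeasPartition Q) :
    entropyRate μ T (partPreimage S Q) = entropyRate ν T' Q := by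
  simp only [entropyRate, ← partPreimage_dynJoin hST,
    partEntropy_partPreimage hS (hQ.dynJoin hT' _)]

end EntropyRate

section Supremum

variable {ι κ : Type*} {f : ι → ℝ} {g : κ → ℝ}

theorem bddAbove_range_of_forall_exists_le_add (h : ∀ i, ∀ ε > 0, ∃ j, f i ≤ g j + ε)
    (hg : BddAbove (Set.range g)) : BddAbove (Set.range f) := by
  obtain ⟨M, hM⟩ := hg
  refine ⟨M + 1, ?_⟩
  rintro _ ⟨i, rfl⟩
  obtain ⟨j, hj⟩ := h i 1 one_pos
  linarith [hM ⟨j, rfl⟩]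

theorem ciSup_le_ciSup_of_forall_exists_le_add [Nonempty ι]
    (h : ∀ i, ∀ ε > 0, ∃ j, f i ≤ g j + ε) (hg : BddAbove (Set.range g)) :
    ⨆ i, f i ≤ ⨆ j, g j :=
  ciSup_le fun i => le_of_forall_pos_le_add fun ε hε =>
    let ⟨j, hj⟩ := h i ε hε
    hj.trans (by linarith [le_ciSup hg j])

theorem iSup_eq_iSup_of_forall_exists_le_add [Nonempty ι] [Nonempty κ]
    (hfg : ∀ i, ∀ ε > 0, ∃ j, f i ≤ g j + ε) (hgf : ∀ j, ∀ ε > 0, ∃ i, g j ≤ f i + ε) :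
    ⨆ i, f i = ⨆ j, g j := by
  by_cases hg : BddAbove (Set.range g)
  · exact le_antisymm (ciSup_le_ciSup_of_forall_exists_le_add hfg hg)
      (ciSup_le_ciSup_of_forall_exists_le_add hgf (bddAbove_range_of_forall_exists_le_add hfg hg))
  · have hf : ¬BddAbove (Set.range f) := fun hf =>
      hg (bddAbove_range_of_forall_exists_le_add hgf hf)
    rw [Real.iSup_of_not_bddAbove hf, Real.iSup_of_not_bddAbove hg]

end Supremum

section FiniteToOne

variable {X Y : Type*} [MeasurableSpace X] [MeasurableSpace Y]

theorem exists_condPartEntropy_partPreimage_le (ν : Measure X) [IsProbabilityMeasure ν]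
    {S : X → Y} (hS : Measurable S)
    (himage : ∀ s, MeasurableSet s → Set.InjOn S s → MeasurableSet (S '' s))
    {R E : Finset (Set X)} {F : Set X} (hR : IsMeasPartition R) (hE : IsMeasPartition E)
    (hF : MeasurableSet F) (hEF : ∀ e ∈ E, e ⊆ F ∨ Set.InjOn S e) :
    ∃ Q : Finset (Set Y), IsMeasPartition Q ∧
      condPartEntropy ν R (partPreimage S Q) ≤
        Real.log E.card + (ν F).toReal * Real.log R.card := by
  classical
  obtain ⟨Q, hQ, hQG⟩ := exists_isMeasPartition_subset_or_subset_compl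
    (R ×ˢ E.filter (Set.InjOn S ·)) (fun p => S '' (p.1 ∩ p.2)) fun p hp => by
      simp only [Finset.mem_product, Finset.mem_filter] at hp
      exact himage _ ((hR.1 _ hp.1).inter (hE.1 _ hp.2.1)) (hp.2.2.mono Set.inter_subset_right)
  refine ⟨Q, hQ, ?_⟩
  have hSQ := hQ.partPreimage hS
  -- On an injectivity cell `e`, the cell `S⁻¹B ∩ e` lies in or misses each `A ∈ R`, because
  -- `B` lies in or misses `S '' (A ∩ e)`.
  have hpure : ∀ D ∈ partJoin (partPreimage S Q) E, D ⊆ F ∨ ∀ A ∈ R, D ⊆ A ∨ Disjoint D A := by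
    intro D hD
    obtain ⟨_, hB', e, he, rfl⟩ := mem_partJoin.1 hD
    obtain ⟨B, hB, rfl⟩ := mem_partPreimage.1 hB'
    refine (hEF e he).imp Set.inter_subset_right.trans fun hinj A hA => ?_
    have hAe : (A, e) ∈ R ×ˢ E.filter (Set.InjOn S ·) := by simp [hA, he, hinj]
    refine (hQG B hB _ hAe).imp (fun hsub x hx => ?_) fun hsub =>
      Set.disjoint_left.2 fun x hx hxA => hsub hx.1 ⟨x, ⟨hxA, hx.2⟩, rfl⟩
    obtain ⟨a, ⟨haA, hae⟩, hax⟩ := hsub hx.1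
    exact hinj hae hx.2 hax ▸ haA
  calc condPartEntropy ν R (partPreimage S Q)
      ≤ condPartEntropy ν (partJoin E R) (partPreimage S Q) :=
        condPartEntropy_le_partJoin_right ν hE hR
    _ = condPartEntropy ν E (partPreimage S Q)
          + condPartEntropy ν R (partJoin (partPreimage S Q) E) :=
        condPartEntropy_partJoin ν hSQ hE hR
    _ ≤ partEntropy ν E + (ν F).toReal * Real.log R.card :=
        add_le_add (condPartEntropy_le_partEntropy ν hE hSQ)
          (condPartEntropy_le_measure_mul_log_card ν hR (hSQ.partJoin hE) hF hpure)
    _ ≤ _ := by grw [partEntropy_le_log_card ν hE]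

end FiniteToOne

section FiberUniquePart

variable {X Y : Type*} {S : X → Y}

def fiberUniquePart (S : X → Y) (U : Set X) : Set X :=
  {x | x ∈ U ∧ ∀ y ∈ U, S y = S x → y = x}

theorem injOn_fiberUniquePart (U : Set X) : Set.InjOn S (fiberUniquePart S U) :=
  fun _ hx _ hy h => (hx.2 _ hy.1 h.symm).symm

end FiberUniquePart

section InjectivityCover

variable {X Y : Type*} [MetricSpace X] [CompactSpace X] [MeasurableSpace X] [BorelSpace X]
  [TopologicalSpace Y] [T2Space Y] {S : X → Y}

theorem measurableSet_fiberUniquePart (hS : Continuous S) {U : Set X} (hU : IsOpen U) :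
    MeasurableSet (fiberUniquePart S U) := by
  have hW : fiberUniquePart S U =
      U \ Prod.fst '' (((Set.univ ×ˢ U) ∩ (Set.diagonal X)ᶜ) ∩ {p | S p.1 = S p.2}) := by
    ext x
    simp only [fiberUniquePart, Set.mem_ofPred_eq, Set.mem_sdiff, Set.mem_image, Set.mem_inter_iff,
      Set.mem_prod, Set.mem_univ, true_and, Set.mem_compl_iff, Set.mem_diagonal_iff, Prod.exists,
      exists_and_right, exists_eq_right, not_exists, not_and]
    exact and_congr_right fun _ => forall_congr' fun y => by tauto
  -- The open factor is a countable union of closed (hence compact) sets, so the projection is a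
  -- countable union of compact sets.
  obtain ⟨F, hFc, -, hFU, -⟩ :=
    ((isOpen_univ.prod hU).inter isClosed_diagonal.isOpen_compl).exists_iUnion_isClosed
  rw [hW, ← hFU, Set.iUnion_inter, Set.image_iUnion]
  exact hU.measurableSet.diff <| .iUnion fun n => (((hFc n).inter (isClosed_eq
    (hS.comp continuous_fst) (hS.comp continuous_snd))).isCompact.image continuous_fst).isClosed
    |>.measurableSet

theorem exists_injOn_cover (hS : Continuous S) (hfin : ∀ y, (S ⁻¹' {y}).Finite) :
    ∃ E : ℕ → Set X, (∀ j, MeasurableSet (E j)) ∧ (⋃ j, E j) = Set.univ ∧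
      ∀ j, Set.InjOn S (E j) := by
  have hcover : ∀ x, ∃ U ∈ TopologicalSpace.countableBasis X, x ∈ fiberUniquePart S U := by
    intro x
    obtain ⟨U, hU, hxU, hUV⟩ :=
      (TopologicalSpace.isBasis_countableBasis X).exists_subset_of_mem_open
      (by simp : x ∈ (S ⁻¹' {S x} \ {x})ᶜ) (hfin (S x)).sdiff.isClosed.isOpen_compl
    refine ⟨U, hU, hxU, fun y hy hSy => ?_⟩
    by_contra hne
    exact hUV hy ⟨hSy, hne⟩
  obtain ⟨u, hu⟩ := ((TopologicalSpace.countable_countableBasis X).insert ∅).exists_eq_range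
    (Set.insert_nonempty _ _)
  have hopen : ∀ j, IsOpen (u j) := fun j => by
    rcases (hu ▸ Set.mem_range_self j : u j ∈ insert ∅ _) with h | h
    · exact h ▸ isOpen_empty
    · exact TopologicalSpace.isOpen_of_mem_countableBasis h
  refine ⟨fun j => fiberUniquePart S (u j), fun j => measurableSet_fiberUniquePart hS (hopen j),
    Set.eq_univ_of_forall fun x => ?_, fun j => injOn_fiberUniquePart _⟩
  obtain ⟨U, hU, hxU⟩ := hcover x
  obtain ⟨j, rfl⟩ : U ∈ Set.range u := hu ▸ Set.mem_insert_of_mem _ hU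
  exact Set.mem_iUnion.2 ⟨j, hxU⟩

theorem exists_isMeasPartition_injOn (hS : Continuous S) (hfin : ∀ y, (S ⁻¹' {y}).Finite)
    (ν : Measure X) [IsFiniteMeasure ν] {δ : ℝ} (hδ : 0 < δ) :
    ∃ E : Finset (Set X), ∃ F : Set X, IsMeasPartition E ∧ MeasurableSet F ∧ (ν F).toReal ≤ δ ∧
      ∀ e ∈ E, e ⊆ F ∨ Set.InjOn S e := by
  obtain ⟨E, hEm, hEcov, hEinj⟩ := exists_injOn_cover hS hfin
  have hacc : ∀ k, MeasurableSet (Set.accumulate E k) := fun k => by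
    rw [Set.accumulate_def]
    exact .biUnion (Set.to_countable _) fun j _ => hEm j
  have hlim : Filter.Tendsto (fun k => ν (Set.accumulate E k)ᶜ) Filter.atTop (nhds 0) := by
    have := tendsto_measure_iInter_atTop (μ := ν) (fun k => (hacc k).compl.nullMeasurableSet)
      (fun _ _ hkl => Set.compl_subset_compl.2 (Set.monotone_accumulate hkl))
      ⟨0, measure_ne_top ν _⟩
    rwa [← Set.compl_iUnion, Set.iUnion_accumulate, hEcov, Set.compl_univ, measure_empty] at this
  obtain ⟨k, hk⟩ := (hlim.eventually (gt_mem_nhds (ENNReal.ofReal_pos.2 hδ))).exists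
  obtain ⟨Q, hQ, hQE⟩ := exists_isMeasPartition_subset_or_subset_compl (Finset.Iic k) E
    fun j _ => hEm j
  refine ⟨Q, (Set.accumulate E k)ᶜ, hQ, (hacc k).compl,
    ENNReal.toReal_le_of_le_ofReal hδ.le hk.le, fun e he => ?_⟩
  by_cases h : ∃ j ≤ k, e ⊆ E j
  · obtain ⟨j, -, hj⟩ := h
    exact Or.inr ((hEinj j).mono hj)
  · refine Or.inl fun x hx hxacc => ?_
    obtain ⟨j, hj, hxj⟩ := Set.mem_accumulate.1 hxacc
    exact (hQE e he j (Finset.mem_Iic.2 hj)).elim (fun hsub => h ⟨j, hj, hsub⟩)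
      fun hsub => hsub hx hxj

end InjectivityCover

theorem exists_entropyRate_le_entropyRate_map_add {X Y : Type*} [MetricSpace X] [CompactSpace X]
    [MeasurableSpace X] [BorelSpace X] [TopologicalSpace Y] [T2Space Y] [MeasurableSpace Y]
    [BorelSpace Y] {ν : Measure X} [IsProbabilityMeasure ν] {T : X → X} {T' : Y → Y}
    {S : X → Y} (hT : MeasurePreserving T ν ν) (hT' : Measurable T') (hS : Continuous S)
    (hST : Function.Semiconj S T T') (hfin : ∀ y, (S ⁻¹' {y}).Finite)
    {P : Finset (Set X)} (hP : IsMeasPartition P) {ε : ℝ} (hε : 0 < ε) :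
    ∃ Q : Finset (Set Y), IsMeasPartition Q ∧
      entropyRate ν T P ≤ entropyRate (ν.map S) T' Q + ε := by
  have hlogP := Real.log_natCast_nonneg P.card
  obtain ⟨E, F, hE, hF, hνF, hEF⟩ :=
    exists_isMeasPartition_injOn hS hfin ν (δ := ε / 2 / (Real.log P.card + 1)) (by positivity)
  obtain ⟨K, hK⟩ := exists_nat_gt (2 * Real.log E.card / ε)
  have hK' : (0 : ℝ) < K :=
    (div_nonneg (mul_nonneg zero_le_two (Real.log_natCast_nonneg _)) hε.le).trans_lt hK
  obtain ⟨Q, hQ, hc⟩ := exists_condPartEntropy_partPreimage_le ν hS.measurable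
    (fun s hs hinj => hs.image_of_continuousOn_injOn hS.continuousOn hinj)
    (hP.dynJoin hT.measurable K) hE hF hEF
  refine ⟨Q, hQ, ?_⟩
  have hrate := entropyRate_le_add_condPartEntropy hT hP (hQ.partPreimage hS.measurable)
    (by exact_mod_cast hK')
  rw [entropyRate_partPreimage (hS.measurable.measurePreserving ν) hST hT' hQ] at hrate
  have h1 : Real.log E.card / K ≤ ε / 2 := by
    rw [div_lt_iff₀ hε] at hK
    rw [div_le_iff₀ hK']
    linarith
  have h2 : (ν F).toReal * Real.log P.card ≤ ε / 2 :=
    calc _ ≤ ε / 2 / (Real.log P.card + 1) * Real.log P.card := by gcongr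
      _ ≤ ε / 2 := by
        rw [div_mul_eq_mul_div, div_le_iff₀ (by positivity)]
        nlinarith
  have h3 : condPartEntropy ν (dynJoin T P K) (partPreimage S Q) / K ≤
      Real.log E.card / K + (ν F).toReal * Real.log P.card := by
    rw [div_add' _ _ _ hK'.ne', div_le_div_iff_of_pos_right hK']
    nlinarith [mul_le_mul_of_nonneg_left (log_card_dynJoin_le T P K)
      (ENNReal.toReal_nonneg (a := ν F))]
  linarith

theorem ksEntropy_map_finite_to_one_general
    {X : Type*} [MetricSpace X] [CompactSpace X] [MeasurableSpace X] [BorelSpace X]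
    (T S : X → X) (hT : Continuous T) (hS : Continuous S)
    (hTS : T ∘ S = S ∘ T)
    (hfin : ∀ x : X, (S ⁻¹' {x}).Finite)
    (ν : Measure X) [IsProbabilityMeasure ν] (hν : Measure.map T ν = ν) :
    Measure.map T (Measure.map S ν) = Measure.map S ν ∧
      ksEntropy (Measure.map S ν) T = ksEntropy ν T := by
  have hST : Function.Semiconj S T T := fun x => (congrFun hTS x).symm
  refine ⟨by rw [Measure.map_map hT.measurable hS.measurable, hTS,
    ← Measure.map_map hS.measurable hT.measurable, hν], ?_⟩
  have : Nonempty {P : Finset (Set X) // IsMeasPartition P} :=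
    ⟨⟨_, IsMeasPartition.singleton_univ⟩⟩
  rw [ksEntropy_eq_iSup_entropyRate, ksEntropy_eq_iSup_entropyRate]
  refine iSup_eq_iSup_of_forall_exists_le_add (fun Q ε hε => ?_) fun P ε hε => ?_
  · refine ⟨⟨_, Q.2.partPreimage hS.measurable⟩, ?_⟩
    rw [entropyRate_partPreimage (hS.measurable.measurePreserving ν) hST hT.measurable Q.2]
    linarith
  · obtain ⟨Q, hQ, h⟩ := exists_entropyRate_le_entropyRate_map_add ⟨hT.measurable, hν⟩
      hT.measurable hS hST hfin P.2 hε
    exact ⟨⟨Q, hQ⟩, h⟩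

/-- Pushing a `T`-invariant measure forward under a commuting finite-to-one continuous
surjection `S` preserves `T`-invariance and the measure-theoretic entropy of `T`. -/
theorem ksEntropy_map_finite_to_one
    {X : Type*} [MetricSpace X] [CompactSpace X] [MeasurableSpace X] [BorelSpace X]
    (T S : X → X) (hT : Continuous T) (hS : Continuous S)
    (hTsurj : Function.Surjective T) (hSsurj : Function.Surjective S)
    (hTS : T ∘ S = S ∘ T)
    (hfin : ∀ x : X, (S ⁻¹' {x}).Finite)
    (ν : Measure X) [IsProbabilityMeasure ν] (hν : Measure.map T ν = ν) :
    Measure.map T (Measure.map S ν) = Measure.map S ν ∧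
      ksEntropy (Measure.map S ν) T = ksEntropy ν T :=
  ksEntropy_map_finite_to_one_general T S hT hS hTS hfin ν hν
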